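/- Let P ⊂ ℝ⁴ be a 4-polytope and let F, F′ be two distinct facets of P whose intersection R = F ∩ F′ is a 2-dimensional face (a ridge) of P. Let a, b, c be vertices of P lying in R, let d be a vertex of P with d ∈ F and d ∉ F′, let d′ be a vertex of P with d′ ∈ F′ and d′ ∉ F, and let e be a vertex of P lying in neither F nor F′. Then sign(det(a,b,c,d,e)) = −sign(det(a,b,c,d′,e)). -/
import Mathlib


open scoped Classical

/-- A polytope in `ℝ^d`: the convex hull of a finite set of points. -/
def IsPolytope (d : ℕ) (P : Set (Fin d → ℝ)) : Prop :=
  ∃ V : Set (Fin d → ℝ), V.Finite ∧ P = convexHull ℝ V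

/-- A `d`-polytope in `ℝ^d`: a polytope whose affine span is all of `ℝ^d`. -/
def IsDPolytope (d : ℕ) (P : Set (Fin d → ℝ)) : Prop :=
  IsPolytope d P ∧ affineSpan ℝ P = ⊤

/-- A face of a polytope `P`: `P` itself, the empty set, or an exposed face of `P`. -/
def IsFace (d : ℕ) (P F : Set (Fin d → ℝ)) : Prop :=
  F = P ∨ F = ∅ ∨ IsExposed ℝ P F

/-- The dimension of a set: the dimension of its affine span (`-1` for the empty set). -/
noncomputable def setDim (d : ℕ) (F : Set (Fin d → ℝ)) : ℤ :=
  if F = ∅ then -1 else (Module.finrank ℝ (vectorSpan ℝ F) : ℤ)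

/-- A `k`-dimensional face of `P`. -/
def IsFaceOfDim (d : ℕ) (P F : Set (Fin d → ℝ)) (k : ℤ) : Prop :=
  IsFace d P F ∧ setDim d F = k

/-- Two polytopes are combinatorially equivalent if there is an inclusion-preserving
bijection between their sets of faces. -/
def CombEquiv (d : ℕ) (P Q : Set (Fin d → ℝ)) : Prop :=
  ∃ e : {F // IsFace d P F} ≃ {F // IsFace d Q F},
    ∀ F G : {F // IsFace d P F}, F.1 ⊆ G.1 ↔ (e F).1 ⊆ (e G).1

/-- The determinant of the 5×5 matrix whose `i`-th row is `(1, xᵢ)` for five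
points of `ℝ⁴`. -/
noncomputable def det5 (a b c d e : Fin 4 → ℝ) : ℝ :=
  (Matrix.of ![Fin.cons 1 a, Fin.cons 1 b, Fin.cons 1 c, Fin.cons 1 d, Fin.cons 1 e]).det

section Helpers

set_option maxRecDepth 8000

lemma updateRow4 (w0 w1 w2 w3 w4 y : Fin 5 → ℝ) :
    (Matrix.of ![w0,w1,w2,w3,w4]).updateRow (4:Fin 5) y = Matrix.of ![w0,w1,w2,w3,y] := by
  funext i j; rw [Matrix.updateRow_apply]; fin_cases i <;> simp

lemma updateRow1 (w0 w1 w2 w3 w4 y : Fin 5 → ℝ) :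
    (Matrix.of ![w0,w1,w2,w3,w4]).updateRow (1:Fin 5) y = Matrix.of ![w0,y,w2,w3,w4] := by
  funext i j; rw [Matrix.updateRow_apply]; fin_cases i <;> simp

lemma row_eq_04 (w0 w1 w2 w3 : Fin 5 → ℝ) : (Matrix.of ![w0,w1,w2,w3,w0]).det = 0 :=
  Matrix.det_zero_of_row_eq (i := 0) (j := 4) (by decide) rfl

lemma row_eq_14 (w0 w1 w2 w3 : Fin 5 → ℝ) : (Matrix.of ![w0,w1,w2,w3,w1]).det = 0 :=
  Matrix.det_zero_of_row_eq (i := 1) (j := 4) (by decide) rfl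

lemma row_eq_24 (w0 w1 w2 w3 : Fin 5 → ℝ) : (Matrix.of ![w0,w1,w2,w3,w2]).det = 0 :=
  Matrix.det_zero_of_row_eq (i := 2) (j := 4) (by decide) rfl

lemma row_eq_34 (w0 w1 w2 w3 : Fin 5 → ℝ) : (Matrix.of ![w0,w1,w2,w3,w3]).det = 0 :=
  Matrix.det_zero_of_row_eq (i := 3) (j := 4) (by decide) rfl

lemma row_eq_02 (w0 w1 w3 w4 : Fin 5 → ℝ) : (Matrix.of ![w0,w1,w0,w3,w4]).det = 0 :=
  Matrix.det_zero_of_row_eq (i := 0) (j := 2) (by decide) rfl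

lemma row_eq_01 (w0 w2 w3 w4 : Fin 5 → ℝ) : (Matrix.of ![w0,w0,w2,w3,w4]).det = 0 :=
  Matrix.det_zero_of_row_eq (i := 0) (j := 1) (by decide) rfl

lemma row_eq_12 (w0 w1 w3 w4 : Fin 5 → ℝ) : (Matrix.of ![w0,w1,w1,w3,w4]).det = 0 :=
  Matrix.det_zero_of_row_eq (i := 1) (j := 2) (by decide) rfl

lemma det_swap34 (w0 w1 w2 w3 w4 : Fin 5 → ℝ) :
    (Matrix.of ![w0,w1,w2,w4,w3]).det = -(Matrix.of ![w0,w1,w2,w3,w4]).det := by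
  have h := Matrix.det_permute (Equiv.swap (3:Fin 5) 4) (Matrix.of ![w0,w1,w2,w3,w4])
  have he : (Matrix.of ![w0,w1,w2,w4,w3])
      = (Matrix.of ![w0,w1,w2,w3,w4]).submatrix (Equiv.swap (3:Fin 5) 4) id := by
    funext i j
    fin_cases i <;> simp [Matrix.submatrix_apply, Equiv.swap_apply_def]
  rw [he, h, Equiv.Perm.sign_swap (by decide)]
  simp

lemma cons_comb (x a b c d d' : Fin 4 → ℝ) (s t α β : ℝ)
    (h : x - a = s•(b-a)+t•(c-a)+α•(d-a)+β•(d'-a)) :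
    (Fin.cons 1 x : Fin 5 → ℝ) = (1-s-t-α-β) • (Fin.cons 1 a : Fin 5 → ℝ) +
      (s • (Fin.cons 1 b : Fin 5 → ℝ) + (t • (Fin.cons 1 c : Fin 5 → ℝ) +
      (α • (Fin.cons 1 d : Fin 5 → ℝ) + β • (Fin.cons 1 d' : Fin 5 → ℝ)))) := by
  funext i
  refine Fin.cases ?_ ?_ i
  · simp only [Fin.cons_zero, Pi.add_apply, Pi.smul_apply, smul_eq_mul]; ring
  · intro j
    have hj := congrFun h j
    simp only [Pi.sub_apply, Pi.add_apply, Pi.smul_apply, smul_eq_mul, Fin.cons_succ] at hj ⊢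
    linarith [hj]

lemma cons_aff2 (x a c : Fin 4 → ℝ) (k : ℝ) (h : x - a = k • (c - a)) :
    (Fin.cons 1 x : Fin 5 → ℝ) = (1-k) • (Fin.cons 1 a : Fin 5 → ℝ) +
      k • (Fin.cons 1 c : Fin 5 → ℝ) := by
  funext i
  refine Fin.cases ?_ ?_ i
  · simp only [Fin.cons_zero, Pi.add_apply, Pi.smul_apply, smul_eq_mul]; ring
  · intro j
    have hj := congrFun h j
    simp only [Pi.sub_apply, Pi.add_apply, Pi.smul_apply, smul_eq_mul, Fin.cons_succ] at hj ⊢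
    linarith [hj]

lemma det5_expand (a b c d d' e : Fin 4 → ℝ) (s t α β : ℝ)
    (h : e - a = s•(b-a)+t•(c-a)+α•(d-a)+β•(d'-a)) :
    det5 a b c d e = β * det5 a b c d d' ∧ det5 a b c d' e = -(α * det5 a b c d d') := by
  constructor
  · rw [det5, ← updateRow4 (Fin.cons 1 a) (Fin.cons 1 b) (Fin.cons 1 c) (Fin.cons 1 d)
      (Fin.cons 1 d') (Fin.cons 1 e), cons_comb e a b c d d' s t α β h]
    simp only [Matrix.det_updateRow_add, Matrix.det_updateRow_smul]
    simp only [updateRow4, row_eq_04, row_eq_14, row_eq_24, row_eq_34]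
    rw [det5]; ring
  · rw [det5, ← updateRow4 (Fin.cons 1 a) (Fin.cons 1 b) (Fin.cons 1 c) (Fin.cons 1 d')
      (Fin.cons 1 d) (Fin.cons 1 e), cons_comb e a b c d' d s t β α (by rw [h]; module)]
    simp only [Matrix.det_updateRow_add, Matrix.det_updateRow_smul]
    simp only [updateRow4, row_eq_04, row_eq_14, row_eq_24, row_eq_34]
    rw [det_swap34, det5]; ring

lemma det5_zero_of_dep (a b c d e : Fin 4 → ℝ) (h : ¬ LinearIndependent ℝ ![b-a, c-a]) :
    det5 a b c d e = 0 := by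
  rw [linearIndependent_fin2] at h
  push_neg at h
  by_cases hca : (![b-a, c-a] : Fin 2 → (Fin 4 → ℝ)) 1 = 0
  · have hca' : c = a := sub_eq_zero.mp (by simpa using hca)
    rw [det5, hca']
    exact row_eq_02 _ _ _ _
  · obtain ⟨k, hk⟩ := h hca
    have hk' : b - a = k • (c - a) := by simpa using hk.symm
    rw [det5, ← updateRow1 (Fin.cons 1 a) (Fin.cons 1 a) (Fin.cons 1 c) (Fin.cons 1 d)
      (Fin.cons 1 e) (Fin.cons 1 b), cons_aff2 b a c k hk']
    simp only [Matrix.det_updateRow_add, Matrix.det_updateRow_smul]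
    simp only [updateRow1, row_eq_01, row_eq_12]
    ring

lemma exposed_of_facet (P F : Set (Fin 4 → ℝ)) (hP : affineSpan ℝ P = ⊤)
    (hF : IsFaceOfDim 4 P F 3) :
    ∃ l : (Fin 4 → ℝ) →L[ℝ] ℝ, F = {x ∈ P | ∀ y ∈ P, l y ≤ l x} := by
  obtain ⟨hface, hdim⟩ := hF
  have hne : F ≠ ∅ := by
    intro h; rw [setDim, if_pos h] at hdim; norm_num at hdim
  rcases hface with h | h | h
  · exfalso
    rw [setDim, if_neg hne] at hdim
    have hvs : vectorSpan ℝ F = ⊤ := by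
      rw [← direction_affineSpan, h, hP]
      exact AffineSubspace.direction_top ℝ _ _
    rw [hvs] at hdim
    rw [finrank_top] at hdim
    simp [Module.finrank_fin_fun] at hdim
  · exact absurd h hne
  · exact h (Set.nonempty_iff_ne_empty.mpr hne)

end Helpers

/-- Orientation flips across a ridge: if `a, b, c` lie in the ridge `F ∩ F'` of two
adjacent facets `F, F'` of a 4-polytope, `d ∈ F \\ F'`, `d' ∈ F' \\ F`, and `e` lies in
neither facet, then the two corresponding orientations are opposite. -/
theorem det5_sign_flip_across_ridge
    (P : Set (Fin 4 → ℝ)) (hP : IsDPolytope 4 P)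
    (F F' : Set (Fin 4 → ℝ)) (hFF' : F ≠ F')
    (hF : IsFaceOfDim 4 P F 3) (hF' : IsFaceOfDim 4 P F' 3)
    (hR : IsFaceOfDim 4 P (F ∩ F') 2)
    (a b c d d' e : Fin 4 → ℝ)
    (haV : a ∈ P.extremePoints ℝ) (hbV : b ∈ P.extremePoints ℝ)
    (hcV : c ∈ P.extremePoints ℝ) (hdV : d ∈ P.extremePoints ℝ)
    (hd'V : d' ∈ P.extremePoints ℝ) (heV : e ∈ P.extremePoints ℝ)
    (ha : a ∈ F ∩ F') (hb : b ∈ F ∩ F') (hc : c ∈ F ∩ F')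
    (hd : d ∈ F) (hd2 : d ∉ F') (hd' : d' ∈ F') (hd'2 : d' ∉ F)
    (he : e ∉ F) (he' : e ∉ F') :
    Real.sign (det5 a b c d e) = - Real.sign (det5 a b c d' e) := by
  by_cases hli : LinearIndependent ℝ ![b - a, c - a]
  swap
  · rw [det5_zero_of_dep a b c d e hli, det5_zero_of_dep a b c d' e hli]
    simp
  have haP : a ∈ P := extremePoints_subset haV
  have hbP : b ∈ P := extremePoints_subset hbV
  have hcP : c ∈ P := extremePoints_subset hcV
  have hdP : d ∈ P := extremePoints_subset hdV
  have hd'P : d' ∈ P := extremePoints_subset hd'V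
  have heP : e ∈ P := extremePoints_subset heV
  obtain ⟨l, hl⟩ := exposed_of_facet P F hP.2 hF
  obtain ⟨l', hl'⟩ := exposed_of_facet P F' hP.2 hF'
  have hFsub : ∀ {x}, x ∈ F → x ∈ P ∧ ∀ y ∈ P, l y ≤ l x := fun {x} hx => by
    rw [hl] at hx; exact hx
  have hF'sub : ∀ {x}, x ∈ F' → x ∈ P ∧ ∀ y ∈ P, l' y ≤ l' x := fun {x} hx => by
    rw [hl'] at hx; exact hx
  have hstrict : ∀ {y}, y ∈ P → y ∉ F → l y < l a := by
    intro y hyP hyF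
    rcases lt_or_eq_of_le ((hFsub ha.1).2 y hyP) with h | h
    · exact h
    · exact absurd (by rw [hl]; exact ⟨hyP, fun z hz => h ▸ (hFsub ha.1).2 z hz⟩) hyF
  have hstrict' : ∀ {y}, y ∈ P → y ∉ F' → l' y < l' a := by
    intro y hyP hyF
    rcases lt_or_eq_of_le ((hF'sub ha.2).2 y hyP) with h | h
    · exact h
    · exact absurd (by rw [hl']; exact ⟨hyP, fun z hz => h ▸ (hF'sub ha.2).2 z hz⟩) hyF
  have hlb : l b = l a := le_antisymm ((hFsub ha.1).2 b hbP) ((hFsub hb.1).2 a haP)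
  have hlc : l c = l a := le_antisymm ((hFsub ha.1).2 c hcP) ((hFsub hc.1).2 a haP)
  have hld : l d = l a := le_antisymm ((hFsub ha.1).2 d hdP) ((hFsub hd).2 a haP)
  have hl'b : l' b = l' a := le_antisymm ((hF'sub ha.2).2 b hbP) ((hF'sub hb.2).2 a haP)
  have hl'c : l' c = l' a := le_antisymm ((hF'sub ha.2).2 c hcP) ((hF'sub hc.2).2 a haP)
  have hl'd' : l' d' = l' a := le_antisymm ((hF'sub ha.2).2 d' hd'P) ((hF'sub hd').2 a haP)
  have hld' : l d' < l a := hstrict hd'P hd'2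
  have hle : l e < l a := hstrict heP he
  have hl'd : l' d < l' a := hstrict' hdP hd2
  have hl'e : l' e < l' a := hstrict' heP he'
  -- the four vectors form a basis
  have hind : LinearIndependent ℝ (![b-a, c-a, d-a, d'-a] : Fin 4 → Fin 4 → ℝ) := by
    rw [Fintype.linearIndependent_iff]
    intro g hg
    rw [Fin.sum_univ_four] at hg
    have hv0 : (![b-a, c-a, d-a, d'-a] : Fin 4 → Fin 4 → ℝ) 0 = b - a := rfl
    have hv1 : (![b-a, c-a, d-a, d'-a] : Fin 4 → Fin 4 → ℝ) 1 = c - a := rfl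
    have hv2 : (![b-a, c-a, d-a, d'-a] : Fin 4 → Fin 4 → ℝ) 2 = d - a := rfl
    have hv3 : (![b-a, c-a, d-a, d'-a] : Fin 4 → Fin 4 → ℝ) 3 = d' - a := rfl
    rw [hv0, hv1, hv2, hv3] at hg
    have hg3 : g 3 = 0 := by
      have h := congrArg l hg
      simp only [map_add, map_smul, map_sub, map_zero, smul_eq_mul] at h
      rw [hlb, hlc, hld] at h
      have h' : g 3 * (l d' - l a) = 0 := by linear_combination h
      rcases mul_eq_zero.mp h' with h'' | h''
      · exact h''
      · exact absurd h'' (sub_ne_zero.mpr hld'.ne)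
    have hg2 : g 2 = 0 := by
      have h := congrArg l' hg
      simp only [map_add, map_smul, map_sub, map_zero, smul_eq_mul] at h
      rw [hl'b, hl'c, hl'd'] at h
      have h' : g 2 * (l' d - l' a) = 0 := by linear_combination h
      rcases mul_eq_zero.mp h' with h'' | h''
      · exact h''
      · exact absurd h'' (sub_ne_zero.mpr hl'd.ne)
    have hg01 : ∀ i, (![g 0, g 1] : Fin 2 → ℝ) i = 0 := by
      apply Fintype.linearIndependent_iff.mp hli
      rw [Fin.sum_univ_two]
      have e0 : (![g 0, g 1] : Fin 2 → ℝ) 0 = g 0 := rfl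
      have e1 : (![g 0, g 1] : Fin 2 → ℝ) 1 = g 1 := rfl
      have eb : (![b-a, c-a] : Fin 2 → Fin 4 → ℝ) 0 = b - a := rfl
      have ec : (![b-a, c-a] : Fin 2 → Fin 4 → ℝ) 1 = c - a := rfl
      rw [e0, e1, eb, ec]
      rw [hg2, hg3] at hg
      simpa using hg
    intro i
    fin_cases i
    · exact hg01 0
    · exact hg01 1
    · exact hg2
    · exact hg3
  have hcard : Fintype.card (Fin 4) = Module.finrank ℝ (Fin 4 → ℝ) := by
    simp [Module.finrank_fin_fun]
  let B := basisOfLinearIndependentOfCardEqFinrank hind hcard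
  have hB : ∀ i, B i = (![b-a, c-a, d-a, d'-a] : Fin 4 → Fin 4 → ℝ) i := fun i =>
    congrFun (coe_basisOfLinearIndependentOfCardEqFinrank hind hcard) i
  set s := B.repr (e - a) 0 with hs
  set t := B.repr (e - a) 1 with ht
  set α := B.repr (e - a) 2 with hα
  set β := B.repr (e - a) 3 with hβdef
  have hrep : e - a = s • (b-a) + t • (c-a) + α • (d-a) + β • (d'-a) := by
    have h := B.sum_repr (e - a)
    rw [Fin.sum_univ_four, hB 0, hB 1, hB 2, hB 3] at h
    exact h.symm
  have hβ : (0:ℝ) < β := by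
    have h := congrArg l hrep
    simp only [map_add, map_smul, map_sub, smul_eq_mul] at h
    rw [hlb, hlc, hld] at h
    have h2 : l e - l a = β * (l d' - l a) := by linear_combination h
    nlinarith [hle, hld']
  have hα : (0:ℝ) < α := by
    have h := congrArg l' hrep
    simp only [map_add, map_smul, map_sub, smul_eq_mul] at h
    rw [hl'b, hl'c, hl'd'] at h
    have h2 : l' e - l' a = α * (l' d - l' a) := by linear_combination h
    nlinarith [hl'e, hl'd]
  obtain ⟨h1, h2⟩ := det5_expand a b c d d' e s t α β hrep
  rw [h1, h2]
  rcases lt_trichotomy (det5 a b c d d') 0 with h | h | h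
  · rw [Real.sign_of_neg (by nlinarith), Real.sign_of_pos (by nlinarith)]
  · rw [h]
    norm_num
  · rw [Real.sign_of_pos (by nlinarith), Real.sign_of_neg (by nlinarith)]
    norm_num
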